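/- The ten vectors μ₁, μ₂, μ₃, μ₄, μ₅, μ₆, μ₇, μ₈, μ₉, μ₁₀ are ℤ-linearly independent in ℂ⁶ (so the ℤ-submodule of ℂ⁶ they generate is free of rank 10). -/
import Mathlib


open Complex

/-- The sixth root of unity `ω = e^{πi/3} = (1 + i√3)/2`. -/
noncomputable def ω : ℂ := (1 + Real.sqrt 3 * I) / 2

/-- The basis vectors `μ₁, …, μ₁₀` of the range of the Chern–Connes character `𝐓₆`. -/
noncomputable def μ (θ : ℝ) : Fin 10 → Fin 6 → ℂ :=
  ![![1, 0, 0, 0, 0, 0],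
    ![1/6, 1/6, 1/6, 1/6, 1/6, 1/6],
    ![1/6, (1 - ω)/6, -ω/6, -ω/6, -(1/6), -(1/6)],
    ![1/6, -ω/6, (ω - 1)/6, (ω - 1)/6, 1/6, 1/6],
    ![1/6, -(1/6), 1/6, 1/6, -(1/6), -(1/6)],
    ![1/6, (ω - 1)/6, -ω/6, -ω/6, 1/6, 1/6],
    ![1/3, 0, 0, 1/3, 0, 0],
    ![1/3, 0, 0, -ω/3, 0, 0],
    ![1/2, 0, 0, 0, 0, 1/2],
    ![(θ : ℂ)/6, ω/6, (1 + ω)/18, (1 + ω)/6, 1/12, 1/3]]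

lemma cons_val_five {α : Type*} {m : ℕ} (x : α) (u : Fin (m + 5) → α) :
    Matrix.vecCons x u 5 =
      Matrix.vecHead (Matrix.vecTail (Matrix.vecTail (Matrix.vecTail (Matrix.vecTail u)))) :=
  rfl

set_option maxHeartbeats 2000000 in
/-- The ten vectors `μ₁, …, μ₁₀` are ℤ-linearly independent in ℂ⁶. -/
theorem mu_linearIndependent (θ : ℝ) (hθ : Irrational θ) :
    LinearIndependent ℤ (μ θ) := by
  rw [Fintype.linearIndependent_iff]
  intro g hg
  have sq3_ne : Real.sqrt 3 ≠ 0 := by positivity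
  have h0 := congrFun hg 0
  have h1 := congrFun hg 1
  have h2 := congrFun hg 2
  have h3 := congrFun hg 3
  have h4 := congrFun hg 4
  have h5 := congrFun hg 5
  simp only [Finset.sum_apply, Pi.smul_apply, Pi.zero_apply] at h0 h1 h2 h3 h4 h5
  simp only [Fin.sum_univ_succ,
    Fin.sum_univ_zero, μ, Matrix.cons_val_zero, Matrix.cons_val_one, Matrix.head_cons,
    Matrix.cons_val_succ, Matrix.cons_val_two, Matrix.cons_val_three, Matrix.cons_val_four,
    cons_val_five, Matrix.vecHead, Matrix.vecTail, Function.comp,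
    Fin.succ_zero_eq_one, zsmul_eq_mul, add_zero,
    show ((1 : Fin 9).succ : Fin 10) = 2 from rfl,
    show ((1 : Fin 8).succ.succ : Fin 10) = 3 from rfl,
    show ((1 : Fin 7).succ.succ.succ : Fin 10) = 4 from rfl,
    show ((1 : Fin 6).succ.succ.succ.succ : Fin 10) = 5 from rfl,
    show ((1 : Fin 5).succ.succ.succ.succ.succ : Fin 10) = 6 from rfl,
    show ((1 : Fin 4).succ.succ.succ.succ.succ.succ : Fin 10) = 7 from rfl,
    show ((1 : Fin 3).succ.succ.succ.succ.succ.succ.succ : Fin 10) = 8 from rfl,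
    show ((1 : Fin 2).succ.succ.succ.succ.succ.succ.succ.succ : Fin 10) = 9 from rfl]
    at h0 h1 h2 h3 h4 h5
  rw [Complex.ext_iff] at h0 h1 h2 h3 h4 h5
  obtain ⟨h0r, h0i⟩ := h0
  obtain ⟨h1r, h1i⟩ := h1
  obtain ⟨h2r, h2i⟩ := h2
  obtain ⟨h3r, h3i⟩ := h3
  obtain ⟨h4r, h4i⟩ := h4
  obtain ⟨h5r, h5i⟩ := h5
  simp only [ω, Complex.add_re, Complex.add_im, Complex.mul_re, Complex.mul_im,
    Complex.div_re, Complex.div_im, Complex.normSq_apply, Complex.one_re, Complex.one_im,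
    Complex.I_re, Complex.I_im, Complex.ofReal_re, Complex.ofReal_im, Complex.intCast_re,
    Complex.intCast_im, Complex.sub_re, Complex.sub_im, Complex.neg_re, Complex.neg_im,
    Complex.inv_re, Complex.inv_im, Complex.re_ofNat, Complex.im_ofNat]
    at h0r h0i h1r h1i h2r h2i h3r h3i h4r h4i h5r h5i
  norm_num at h0r h1r h1i h2r h2i h3r h3i h4r h5r
  -- imaginary parts give three integer relations after cancelling √3
  have A1 : (-(g 2 : ℝ) - g 3 + g 5 + g 9) * Real.sqrt 3 = 0 := by
    linear_combination 12 * h1i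
  have A2 : (-3*(g 2 : ℝ) + 3*g 3 - 3*g 5 + g 9) * Real.sqrt 3 = 0 := by
    linear_combination 36 * h2i
  have A3 : (-(g 2 : ℝ) + g 3 - g 5 - 2*g 7 + g 9) * Real.sqrt 3 = 0 := by
    linear_combination 12 * h3i
  have B1 : -(g 2) - g 3 + g 5 + g 9 = 0 := by
    exact_mod_cast (mul_eq_zero.mp A1).resolve_right sq3_ne
  have B2 : -3*(g 2) + 3*g 3 - 3*g 5 + g 9 = 0 := by
    exact_mod_cast (mul_eq_zero.mp A2).resolve_right sq3_ne
  have B3 : -(g 2) + g 3 - g 5 - 2*g 7 + g 9 = 0 := by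
    exact_mod_cast (mul_eq_zero.mp A3).resolve_right sq3_ne
  -- real parts give rational relations
  have C1 : 2*(g 1) + g 2 - g 3 - 2*g 4 - g 5 + g 9 = 0 := by
    have : 2*(g 1 : ℝ) + g 2 - g 3 - 2*g 4 - g 5 + g 9 = 0 := by linear_combination 12 * h1r
    exact_mod_cast this
  have C2 : 6*(g 1) - 3*g 2 - 3*g 3 + 6*g 4 - 3*g 5 + 3*g 9 = 0 := by
    have : 6*(g 1 : ℝ) - 3*g 2 - 3*g 3 + 6*g 4 - 3*g 5 + 3*g 9 = 0 := by
      linear_combination 36 * h2r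
    exact_mod_cast this
  have C3 : 2*(g 1) - g 2 - g 3 + 2*g 4 - g 5 + 4*g 6 - 2*g 7 + 3*g 9 = 0 := by
    have : 2*(g 1 : ℝ) - g 2 - g 3 + 2*g 4 - g 5 + 4*g 6 - 2*g 7 + 3*g 9 = 0 := by
      linear_combination 12 * h3r
    exact_mod_cast this
  have C4 : 2*(g 1) - 2*g 2 + 2*g 3 - 2*g 4 + 2*g 5 + g 9 = 0 := by
    have : 2*(g 1 : ℝ) - 2*g 2 + 2*g 3 - 2*g 4 + 2*g 5 + g 9 = 0 := by
      linear_combination 12 * h4r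
    exact_mod_cast this
  have C5 : g 1 - g 2 + g 3 - g 4 + g 5 + 3*g 8 + 2*g 9 = 0 := by
    have : (g 1 : ℝ) - g 2 + g 3 - g 4 + g 5 + 3*g 8 + 2*g 9 = 0 := by
      linear_combination 6 * h5r
    exact_mod_cast this
  -- the θ coordinate: irrationality forces g 9 = 0
  have Hθ : (g 9 : ℝ) * θ = -(6*(g 0 : ℝ) + g 1 + g 2 + g 3 + g 4 + g 5 + 2*g 6 + 2*g 7
      + 3*g 8) := by linear_combination 6 * h0r
  have h9 : g 9 = 0 := by
    by_contra h9
    apply hθ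
    refine ⟨(-(6*(g 0 : ℚ) + g 1 + g 2 + g 3 + g 4 + g 5 + 2*g 6 + 2*g 7 + 3*g 8)) / (g 9), ?_⟩
    have h9' : (g 9 : ℝ) ≠ 0 := Int.cast_ne_zero.mpr h9
    push_cast
    field_simp
    linarith [Hθ]
  have C0 : 6*(g 0) + g 1 + g 2 + g 3 + g 4 + g 5 + 2*g 6 + 2*g 7 + 3*g 8 = 0 := by
    have : (6*(g 0 : ℝ) + g 1 + g 2 + g 3 + g 4 + g 5 + 2*g 6 + 2*g 7 + 3*g 8) = 0 := by
      rw [h9] at Hθ; push_cast at Hθ; linarith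
    exact_mod_cast this
  intro i
  have k0 : g 0 = 0 := by omega
  have k1 : g 1 = 0 := by omega
  have k2 : g 2 = 0 := by omega
  have k3 : g 3 = 0 := by omega
  have k4 : g 4 = 0 := by omega
  have k5 : g 5 = 0 := by omega
  have k6 : g 6 = 0 := by omega
  have k7 : g 7 = 0 := by omega
  have k8 : g 8 = 0 := by omega
  fin_cases i <;> assumption
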